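/- Under the bounding function assumptions (running cost $c\leq c_c b$, terminal cost $g\leq c_g b$, flow bound $b(\phi_t^\gamma(z))\leq c_\phi b(v)$, jump rate bounded above by $M_\lambda$, survival function $\chi_s^\gamma(z)\leq e^{-\delta s}$), the kernel integral satisfies $\int_\Upsilon B_\zeta(y)\,\mathcal{Q}'(dy\,|\,z,\gamma)\leq B_\zeta(z)\,c_\phi\,\frac{M_\lambda}{\zeta+\delta}$ for every $\zeta>0$, where $B_\zeta(v,d,h)=b(v)e^{\zeta(T-h)}$ and $\mathcal{Q}'(B\times C\times E|z,\gamma)=\int_0^{T-h}\chi_t^\gamma(z)\mathbf{1}_E(h+t)\mathbf{1}_B(\phi_t^\gamma(z))\lambda_d(\phi_t^\gamma(z),\gamma(t))\mathcal{Q}(C|\phi_t^\gamma(z),d,\gamma(t))\,dt$. -/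

import Mathlib

open MeasureTheory

/-! Since `Q t` is a probability vector the sum over `D` collapses, and on `[0, T - h]` the
integrand is at most `M_lam c_φ b(v) e^{ζ(T-h)} e^{-(ζ+δ)t}`: the survival factor `e^{-δt}`
combines with the discount `e^{-ζt}`. Integrating the exponential gives at most `1/(ζ+δ)`. -/

theorem Real.integral_exp_neg_mul_le_inv {c : ℝ} (hc : 0 < c) (a : ℝ) :
    ∫ t in (0:ℝ)..a, Real.exp (-c * t) ≤ c⁻¹ := by
  have hc' : -c ≠ 0 := neg_ne_zero.mpr hc.ne'
  rw [intervalIntegral.integral_comp_mul_left (fun x => Real.exp x) hc', integral_exp,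
    mul_zero, Real.exp_zero, smul_eq_mul, inv_neg, neg_mul, ← mul_neg, neg_sub]
  exact mul_le_of_le_one_right (inv_pos.mpr hc).le (by linarith [Real.exp_pos (-c * a)])

theorem intervalIntegral.integral_mono_on_of_nonneg {f g : ℝ → ℝ} {a b : ℝ} (hab : a ≤ b)
    (hf : ∀ x ∈ Set.Ioc a b, 0 ≤ f x) (h : ∀ x ∈ Set.Ioc a b, f x ≤ g x)
    (hg : IntervalIntegrable g volume a b) :
    ∫ x in a..b, f x ≤ ∫ x in a..b, g x := by
  rw [intervalIntegral.integral_of_le hab, intervalIntegral.integral_of_le hab]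
  exact setIntegral_mono_of_nonneg hf h ((intervalIntegrable_iff_integrableOn_Ioc_of_le hab).mp hg)

theorem mul_mul_exp_le_exp_decay {χ l β M B δ ζ a t : ℝ}
    (hχ : χ ≤ Real.exp (-δ * t)) (hl0 : 0 ≤ l) (hl : l ≤ M)
    (hβ0 : 0 ≤ β) (hβ : β ≤ B) :
    χ * l * (β * Real.exp (ζ * (a - t)))
      ≤ M * B * Real.exp (ζ * a) * Real.exp (-(ζ + δ) * t) := by
  have hdecay : Real.exp (-δ * t) * Real.exp (ζ * (a - t))
      = Real.exp (ζ * a) * Real.exp (-(ζ + δ) * t) := by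
    rw [← Real.exp_add, ← Real.exp_add]; ring_nf
  calc χ * l * (β * Real.exp (ζ * (a - t)))
        ≤ Real.exp (-δ * t) * M * (B * Real.exp (ζ * (a - t))) := by
          gcongr
          exact mul_nonneg (Real.exp_pos _).le (hl0.trans hl)
    _ = M * B * Real.exp (ζ * a) * Real.exp (-(ζ + δ) * t) := by
          linear_combination M * B * hdecay

/-- Since `B_ζ(y) = b(v_y) e^{ζ(T-h_y)}` and the post-jump time is `h + t`, the kernel integral
`∫ B_ζ dQ'` is `∫_0^{T-h} χ_t λ_t (∑_{r∈D} Q_t({r}) b(φ_t) e^{ζ(T-h-t)}) dt`. -/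
theorem stmt_4_general
    {H D : Type*} [NormedAddCommGroup H] [Fintype D]
    (T h : ℝ) (hh : h ∈ Set.Icc (0:ℝ) T)
    (b : H → ℝ) (c_φ δ M_lam ζ : ℝ)
    (hcφ : 0 ≤ c_φ) (hδ : 0 < δ) (hδM : δ ≤ M_lam) (hζ : 0 < ζ)
    (v : H) (φ : ℝ → H) (χ lam : ℝ → ℝ) (Q : ℝ → D → ℝ)
    (hb : ∀ x, 0 ≤ b x)
    (hφ : ∀ t ∈ Set.Icc (0:ℝ) T, b (φ t) ≤ c_φ * b v)
    (hlam : ∀ t ∈ Set.Icc (0:ℝ) T, δ ≤ lam t ∧ lam t ≤ M_lam)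
    (hχ : ∀ s ∈ Set.Icc (0:ℝ) T, 0 ≤ χ s ∧ χ s ≤ Real.exp (-δ * s))
    (hQsum : ∀ t, ∑ r : D, Q t r = 1) :
    (∫ t in (0:ℝ)..(T - h),
        χ t * lam t * ∑ r : D, Q t r * (b (φ t) * Real.exp (ζ * (T - h - t))))
      ≤ (b v * Real.exp (ζ * (T - h))) * (c_φ * (M_lam / (ζ + δ))) := by
  simp_rw [← Finset.sum_mul, hQsum, one_mul]
  set K := M_lam * (c_φ * b v) * Real.exp (ζ * (T - h))
  have hK : 0 ≤ K := by have := hb v; have : 0 < M_lam := hδ.trans_le hδM; positivity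
  have hbound : ∀ t ∈ Set.Ioc 0 (T - h),
      0 ≤ χ t * lam t * (b (φ t) * Real.exp (ζ * (T - h - t))) ∧
      χ t * lam t * (b (φ t) * Real.exp (ζ * (T - h - t))) ≤ K * Real.exp (-(ζ + δ) * t) := by
    intro t ht
    have htT : t ∈ Set.Icc 0 T := ⟨ht.1.le, by linarith [ht.2, hh.1]⟩
    obtain ⟨hχ0, hχt⟩ := hχ t htT
    obtain ⟨hδl, hlM⟩ := hlam t htT
    have hl0 : 0 ≤ lam t := hδ.le.trans hδl
    have hbφ : 0 ≤ b (φ t) := hb _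
    exact ⟨by positivity, mul_mul_exp_le_exp_decay hχt hl0 hlM hbφ (hφ t htT)⟩
  calc (∫ t in (0:ℝ)..(T - h), χ t * lam t * (b (φ t) * Real.exp (ζ * (T - h - t))))
        ≤ ∫ t in (0:ℝ)..(T - h), K * Real.exp (-(ζ + δ) * t) :=
          intervalIntegral.integral_mono_on_of_nonneg (by linarith [hh.2])
            (fun t ht => (hbound t ht).1) (fun t ht => (hbound t ht).2)
            (Continuous.intervalIntegrable (by fun_prop) _ _)
    _ ≤ K * (ζ + δ)⁻¹ := by
          rw [intervalIntegral.integral_const_mul]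
          exact mul_le_mul_of_nonneg_left (Real.integral_exp_neg_mul_le_inv (by positivity) _) hK
    _ = (b v * Real.exp (ζ * (T - h))) * (c_φ * (M_lam / (ζ + δ))) := by ring

/-- Bound on the integral of the bounding function `B_ζ` against the stochastic
kernel `Q'` of the imbedded MDP: since `B_ζ(y) = b(v_y) e^{ζ(T-h_y)}` and the
post-jump time is `h + t`, the kernel integral is
`∫_0^{T-h} χ_t λ_t (∑_{r∈D} Q_t({r}) b(φ_t) e^{ζ(T-h-t)}) dt`. -/
theorem stmt_4
    {H D : Type*} [NormedAddCommGroup H] [Fintype D]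
    (T h : ℝ) (hh : h ∈ Set.Icc (0:ℝ) T)
    (b : H → ℝ) (c_φ δ M_lam ζ : ℝ)
    (hcφ : 0 ≤ c_φ) (hδ : 0 < δ) (hδM : δ ≤ M_lam) (hζ : 0 < ζ)
    (v : H) (φ : ℝ → H) (χ lam : ℝ → ℝ) (Q : ℝ → D → ℝ)
    (hb : ∀ x, 0 ≤ b x)
    (hφ : ∀ t ∈ Set.Icc (0:ℝ) T, b (φ t) ≤ c_φ * b v)
    (hlam : ∀ t ∈ Set.Icc (0:ℝ) T, δ ≤ lam t ∧ lam t ≤ M_lam)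
    (hχ : ∀ s ∈ Set.Icc (0:ℝ) T, 0 ≤ χ s ∧ χ s ≤ Real.exp (-δ * s))
    (hQpos : ∀ t r, 0 ≤ Q t r) (hQsum : ∀ t, ∑ r : D, Q t r = 1) :
    (∫ t in (0:ℝ)..(T - h),
        χ t * lam t * ∑ r : D, Q t r * (b (φ t) * Real.exp (ζ * (T - h - t))))
      ≤ (b v * Real.exp (ζ * (T - h))) * (c_φ * (M_lam / (ζ + δ))) :=
  stmt_4_general T h hh b c_φ δ M_lam ζ hcφ hδ hδM hζ v φ χ lam Q hb hφ hlam hχ hQsum
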